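/- Every cycle in the graph G, obtained from the Hamilton cycle v_0 v_1 ... v_{n-1} v_0 by adding chords v_0 v_{a_i} for indices 1 ≤ i ≤ k (with a_1 = 1, a_k = n-1), has length of the form a_j - a_i + 2 for some 1 ≤ i < j ≤ k. -/

import Mathlib

/-!
Away from `v_0` the graph is the path `v_1 v_2 ⋯ v_{n-1}`, so a path avoiding `v_0` between
`v_p` and `v_q` has length `|p - q|`, and a cycle avoiding `v_0` would have length `2`. Hence
every cycle passes through `v_0`; its two edges at `v_0` are chords (or cycle edges) to some
`v_{a_i}` and `v_{a_j}`, and the rest of the cycle is the path between them, of length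
`|a_j - a_i|`.
-/

def IsCycleSet {V : Type*} [DecidableEq V] (G : SimpleGraph V) (s : Finset (Sym2 V)) : Prop :=
  ∃ (u : V) (w : G.Walk u u), w.IsCycle ∧ w.edges.toFinset = s

open SimpleGraph

lemma Fin.val_eq_sub_one_of_add_one_eq_zero {n : ℕ} [NeZero n] {i : Fin n} (h : i + 1 = 0) :
    (i : ℕ) = n - 1 := by
  obtain ⟨m, rfl⟩ := Nat.exists_eq_succ_of_ne_zero (NeZero.ne n)
  have hval := Fin.val_add_one i
  rw [h] at hval
  split_ifs at hval with hi
  · simp [hi]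
  · simp at hval

lemma Fin.val_add_one_of_add_one_ne_zero {n : ℕ} [NeZero n] {i : Fin n} (h : i + 1 ≠ 0) :
    ((i + 1 : Fin n) : ℕ) = i + 1 := by
  obtain ⟨m, rfl⟩ := Nat.exists_eq_succ_of_ne_zero (NeZero.ne n)
  rw [Fin.val_add_one, if_neg]
  rintro rfl
  exact h (Fin.last_add_one m)

def chordedCycleGraph {n k : ℕ} [NeZero n] (a : Fin k → Fin n) : SimpleGraph (Fin n) :=
  fromEdgeSet ({e | ∃ i : Fin n, e = s(i, i + 1)} ∪ {e | ∃ i : Fin k, e = s(0, a i)})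

section chordedCycleGraph

variable {n k : ℕ} [NeZero n] (a : Fin k → Fin n)

lemma chordedCycleGraph_adj_val_of_ne_zero {u v : Fin n} (h : (chordedCycleGraph a).Adj u v)
    (hu : u ≠ 0) (hv : v ≠ 0) : (v : ℕ) = u + 1 ∨ (u : ℕ) = v + 1 := by
  obtain ⟨⟨i, hi⟩ | ⟨i, hi⟩, -⟩ := (fromEdgeSet_adj _).1 h
  · rcases Sym2.eq_iff.1 hi with ⟨rfl, rfl⟩ | ⟨rfl, rfl⟩
    · exact .inl (Fin.val_add_one_of_add_one_ne_zero hv)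
    · exact .inr (Fin.val_add_one_of_add_one_ne_zero hu)
  · rcases Sym2.eq_iff.1 hi with ⟨rfl, -⟩ | ⟨-, rfl⟩ <;> contradiction

lemma chordedCycleGraph_mem_range_of_adj_zero {i₀ i₁ : Fin k} (h₀ : (a i₀ : ℕ) = 1)
    (h₁ : (a i₁ : ℕ) = n - 1) {z : Fin n} (h : (chordedCycleGraph a).Adj 0 z) :
    z ∈ Set.range a := by
  obtain ⟨⟨i, hi⟩ | ⟨i, hi⟩, hz⟩ := (fromEdgeSet_adj _).1 h
  · rcases Sym2.eq_iff.1 hi with ⟨rfl, rfl⟩ | ⟨hi, rfl⟩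
    · refine ⟨i₀, Fin.ext ?_⟩
      rw [h₀, Fin.val_add_one_of_add_one_ne_zero hz.symm, Fin.val_zero]
    · exact ⟨i₁, Fin.ext (h₁.trans (Fin.val_eq_sub_one_of_add_one_eq_zero hi.symm).symm)⟩
  · rcases Sym2.eq_iff.1 hi with ⟨-, rfl⟩ | ⟨-, rfl⟩
    · exact ⟨i, rfl⟩
    · exact absurd rfl hz

end chordedCycleGraph

namespace SimpleGraph.Walk

variable {V : Type*} {G : SimpleGraph V} {f : V → ℕ} {c : V}

lemma IsTrail.card_edges_toFinset [DecidableEq V] {u v : V} {p : G.Walk u v} (hp : p.IsTrail) :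
    p.edges.toFinset.card = p.length := by
  rw [List.toFinset_card_of_nodup hp.edges_nodup, length_edges]

lemma exists_mem_support_eq_of_min_le_of_le_max
    (hf : ∀ u v, G.Adj u v → u ≠ c → v ≠ c → f v = f u + 1 ∨ f u = f v + 1)
    {x y : V} (p : G.Walk x y) (hc : c ∉ p.support) {m : ℕ}
    (hm₁ : min (f x) (f y) ≤ m) (hm₂ : m ≤ max (f x) (f y)) :
    ∃ v ∈ p.support, f v = m := by
  induction p with
  | nil => exact ⟨_, start_mem_support _, by omega⟩
  | @cons u v w h p ih =>
    rw [support_cons, List.mem_cons, not_or] at hc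
    by_cases hmu : f u = m
    · exact ⟨u, start_mem_support _, hmu⟩
    have hstep := hf u v h (Ne.symm hc.1) (fun hv ↦ hc.2 (hv ▸ p.start_mem_support))
    obtain ⟨t, ht, hft⟩ := ih hc.2 (by omega) (by omega)
    exact ⟨t, List.mem_cons_of_mem _ ht, hft⟩

lemma IsPath.length_eq_max_sub_min (hf_inj : f.Injective)
    (hf : ∀ u v, G.Adj u v → u ≠ c → v ≠ c → f v = f u + 1 ∨ f u = f v + 1)
    {x y : V} {p : G.Walk x y} (hp : p.IsPath) (hc : c ∉ p.support) :
    p.length = max (f x) (f y) - min (f x) (f y) := by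
  induction p with
  | nil => simp
  | @cons u v w h p ih =>
    rw [support_cons, List.mem_cons, not_or] at hc
    rw [cons_isPath_iff] at hp
    have hstep := hf u v h (Ne.symm hc.1) (fun hv ↦ hc.2 (hv ▸ p.start_mem_support))
    -- `f u` cannot lie between `f v` and `f w`: it would be attained on `p`, which avoids `u`.
    have hu_out : ¬ (min (f v) (f w) ≤ f u ∧ f u ≤ max (f v) (f w)) := by
      rintro ⟨h₁, h₂⟩
      obtain ⟨t, ht, hft⟩ := exists_mem_support_eq_of_min_le_of_le_max hf p hc.2 h₁ h₂
      exact hp.2 (hf_inj hft ▸ ht)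
    rw [length_cons, ih hp.1 hc.2]
    omega

lemma IsCycle.mem_support_of_unit_steps (hf_inj : f.Injective)
    (hf : ∀ u v, G.Adj u v → u ≠ c → v ≠ c → f v = f u + 1 ∨ f u = f v + 1)
    {u : V} {w : G.Walk u u} (hw : w.IsCycle) : c ∈ w.support := by
  by_contra hc
  have h3 := hw.three_le_length
  cases w with
  | nil => exact hw.not_nil Walk.Nil.nil
  | cons h p =>
    rw [support_cons, List.mem_cons, not_or] at hc
    have hstep := hf _ _ h (Ne.symm hc.1) (fun hv ↦ hc.2 (hv ▸ p.start_mem_support))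
    have hlen := ((cons_isCycle_iff p h).1 hw).1.length_eq_max_sub_min hf_inj hf hc.2
    rw [length_cons] at h3
    omega

lemma IsCycle.exists_length_eq_max_sub_min_add_two (hf_inj : f.Injective)
    (hf : ∀ u v, G.Adj u v → u ≠ c → v ≠ c → f v = f u + 1 ∨ f u = f v + 1)
    {w : G.Walk c c} (hw : w.IsCycle) :
    ∃ z y, G.Adj c z ∧ G.Adj c y ∧ w.length = max (f z) (f y) - min (f z) (f y) + 2 := by
  cases w with
  | nil => exact absurd Walk.Nil.nil hw.not_nil
  | @cons _ z _ h p =>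
    have hp_nil : ¬ p.Nil := fun hnil ↦ h.ne (hnil.eq).symm
    obtain ⟨y, q, h', rfl⟩ : ∃ y q, ∃ h' : G.Adj y c, p = q.concat h' :=
      ⟨_, p.dropLast, p.adj_penultimate hp_nil, (concat_dropLast _).symm⟩
    obtain ⟨hq, hcq⟩ := (concat_isPath_iff h').1 ((cons_isCycle_iff _ h).1 hw).1
    refine ⟨z, y, h, h'.symm, ?_⟩
    rw [length_cons, length_concat, hq.length_eq_max_sub_min hf_inj hf hcq]

end SimpleGraph.Walk

/-- Every cycle of the graph obtained from the Hamilton cycle `v_0 v_1 ... v_{n-1} v_0`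
by adding the chords `v_0 v_{a i}` (where `a 0 = 1` and `a (k-1) = n - 1`) has length
`a j - a i + 2` for some `i < j`. -/
theorem stmt1 (n k : ℕ) [NeZero n] (hk : 2 ≤ k)
    (a : Fin k → Fin n) (hmono : StrictMono a)
    (h1 : (a ⟨0, by omega⟩ : ℕ) = 1) (hlast : (a ⟨k - 1, by omega⟩ : ℕ) = n - 1)
    (G : SimpleGraph (Fin n))
    (hG : G = SimpleGraph.fromEdgeSet
      ({e | ∃ i : Fin n, e = s(i, i + 1)} ∪ {e | ∃ i : Fin k, e = s(0, a i)})) :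
    ∀ s : Finset (Sym2 (Fin n)), IsCycleSet G s →
      ∃ i j : Fin k, i < j ∧ s.card = (a j : ℕ) - (a i : ℕ) + 2 := by
  obtain rfl : G = chordedCycleGraph a := hG
  have hf : ∀ u v, (chordedCycleGraph a).Adj u v → u ≠ 0 → v ≠ 0 →
      (v : ℕ) = u + 1 ∨ (u : ℕ) = v + 1 :=
    fun _ _ ↦ chordedCycleGraph_adj_val_of_ne_zero a
  rintro s ⟨u, w, hw, rfl⟩
  have h0_mem := hw.mem_support_of_unit_steps Fin.val_injective hf
  have hw₀ := hw.rotate h0_mem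
  obtain ⟨z, y, hz, hy, hlen⟩ := hw₀.exists_length_eq_max_sub_min_add_two Fin.val_injective hf
  obtain ⟨i, rfl⟩ := chordedCycleGraph_mem_range_of_adj_zero a h1 hlast hz
  obtain ⟨j, rfl⟩ := chordedCycleGraph_mem_range_of_adj_zero a h1 hlast hy
  have h3 := hw₀.three_le_length
  rw [Walk.length_rotate] at hlen h3
  rw [hw.isTrail.card_edges_toFinset, hlen]
  rcases lt_trichotomy i j with hij | rfl | hij
  · exact ⟨i, j, hij, by have := hmono hij; omega⟩
  · omega
  · exact ⟨j, i, hij, by have := hmono hij; omega⟩
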